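/- If W satisfies the minimal constraints, W·ln W, W², and W³ are integrable, and the purity of W satisfies μ ≤ 4 − 2√3, then S[W] ≥ 1 + ln π. -/
import Mathlib


open Real MeasureTheory

/-- Quadratic logarithm bound: for `0 < t ≤ 1`, `log t ≤ (t-1) - (1-t)²/2`. -/
lemma log_le_quadratic {t : ℝ} (ht0 : 0 < t) (ht1 : t ≤ 1) :
    Real.log t ≤ (t - 1) - (1 - t) ^ 2 / 2 := by
  have h0 : (0 : ℝ) ∉ Set.uIcc t 1 := by
    rw [Set.uIcc_of_le ht1, Set.mem_Icc]
    push_neg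
    intro h; linarith
  have hinv : ∫ x in t..1, x⁻¹ = Real.log (1 / t) := integral_inv h0
  have hint1 : IntervalIntegrable (fun x : ℝ => 2 - x) volume t 1 :=
    (continuous_const.sub continuous_id).intervalIntegrable t 1
  have hint2 : IntervalIntegrable (fun x : ℝ => x⁻¹) volume t 1 := by
    apply intervalIntegral.intervalIntegrable_inv (f := fun x => x) _ continuousOn_id
    intro x hx
    rw [Set.uIcc_of_le ht1, Set.mem_Icc] at hx
    exact ne_of_gt (lt_of_lt_of_le ht0 hx.1)
  have hmono : ∫ x in t..1, (2 - x) ≤ ∫ x in t..1, x⁻¹ := by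
    apply intervalIntegral.integral_mono_on ht1 hint1 hint2
    intro x hx
    have hx0 : 0 < x := lt_of_lt_of_le ht0 hx.1
    have : 2 - x ≤ 1 / x := by
      rw [le_div_iff₀ hx0]; nlinarith [sq_nonneg (x - 1)]
    simpa [one_div] using this
  have hcalc : ∫ x in t..1, (2 - x) = 3 / 2 - 2 * t + t ^ 2 / 2 := by
    rw [intervalIntegral.integral_sub (intervalIntegrable_const)
      (intervalIntegral.intervalIntegrable_id), intervalIntegral.integral_const,
      integral_id]
    simp; ring
  have hlogt : Real.log (1 / t) = -Real.log t := by
    rw [one_div, Real.log_inv]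
  rw [hinv, hlogt, hcalc] at hmono
  nlinarith

/-- If `W` satisfies the minimal constraints, `W·ln W`, `W²`, `W³` are integrable, and the
purity `μ = 2π ∫ W²` satisfies `μ ≤ 4 − 2√3`, then `S[W] ≥ 1 + ln π`. -/
theorem wigner_conjecture_of_purity_threshold_n2 (W : ℝ × ℝ → ℝ) (hmeas : Measurable W)
    (hpos : ∀ z, 0 ≤ W z)
    (hnorm : ∫ z, W z = 1)
    (hbound : ∀ z, Real.pi * W z ≤ 1)
    (hlog : Integrable (fun z => W z * Real.log (W z)))
    (hsq : Integrable (fun z => (W z) ^ 2))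
    (hcube : Integrable (fun z => (W z) ^ 3))
    (hmu : 2 * Real.pi * (∫ z, (W z) ^ 2) ≤ 4 - 2 * Real.sqrt 3) :
    (-∫ z, W z * Real.log (W z)) ≥ 1 + Real.log Real.pi := by
  have hW : Integrable W := by
    by_contra h
    rw [integral_undef h] at hnorm
    norm_num at hnorm
  set b := ∫ z, (W z) ^ 2 with hb
  set d := ∫ z, (W z) ^ 3 with hd
  have hb0 : 0 ≤ b := integral_nonneg fun z => pow_nonneg (hpos z) 2
  have hcomb : ∀ c1 c2 c3 : ℝ,
      ∫ z, (c1 * W z + c2 * (W z) ^ 2 + c3 * (W z) ^ 3) = c1 + c2 * b + c3 * d := by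
    intro c1 c2 c3
    have h1 : Integrable (fun z => c1 * W z) := hW.const_mul _
    have h2 : Integrable (fun z => c2 * (W z) ^ 2) := hsq.const_mul _
    have h3 : Integrable (fun z => c3 * (W z) ^ 3) := hcube.const_mul _
    have h12 : Integrable (fun z => c1 * W z + c2 * (W z) ^ 2) := h1.add h2
    rw [integral_add h12 h3, integral_add h1 h2, integral_const_mul, integral_const_mul,
      integral_const_mul, hnorm, mul_one]
  -- Cauchy–Schwarz style: ∫ W (πb − πW)² ≥ 0 gives d ≥ b².
  have hCS : Real.pi ^ 2 * b ^ 2 ≤ Real.pi ^ 2 * d := by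
    have hnn : 0 ≤ ∫ z, W z * (Real.pi * b - Real.pi * W z) ^ 2 :=
      integral_nonneg fun z => mul_nonneg (hpos z) (sq_nonneg _)
    have hexp : (fun z => W z * (Real.pi * b - Real.pi * W z) ^ 2)
        = fun z => (Real.pi * b) ^ 2 * W z + (-(2 * Real.pi ^ 2 * b)) * (W z) ^ 2
            + Real.pi ^ 2 * (W z) ^ 3 := by
      funext z; ring
    rw [hexp, hcomb] at hnn
    nlinarith
  -- pointwise bound
  set g : ℝ × ℝ → ℝ := fun z =>
    (-(3 / 2) - Real.log Real.pi) * W z + 2 * Real.pi * (W z) ^ 2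
      + (-(Real.pi ^ 2 / 2)) * (W z) ^ 3 with hg
  have hpt : ∀ z, W z * Real.log (W z) ≤ g z := by
    intro z
    rcases eq_or_lt_of_le (hpos z) with h | h
    · simp [hg, ← h]
    · have ht0 : 0 < Real.pi * W z := mul_pos Real.pi_pos h
      have hl := log_le_quadratic ht0 (hbound z)
      rw [Real.log_mul (ne_of_gt Real.pi_pos) (ne_of_gt h)] at hl
      have := mul_le_mul_of_nonneg_left hl (hpos z)
      simp only [hg]
      nlinarith
  have hgInt : Integrable g := by
    have h1 : Integrable (fun z => (-(3 / 2) - Real.log Real.pi) * W z) := hW.const_mul _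
    have h2 : Integrable (fun z => 2 * Real.pi * (W z) ^ 2) := hsq.const_mul _
    have h3 : Integrable (fun z => (-(Real.pi ^ 2 / 2)) * (W z) ^ 3) := hcube.const_mul _
    exact (h1.add h2).add h3
  have hle : ∫ z, W z * Real.log (W z) ≤ ∫ z, g z := integral_mono hlog hgInt hpt
  have hgval : ∫ z, g z = (-(3 / 2) - Real.log Real.pi) + 2 * Real.pi * b
      + (-(Real.pi ^ 2 / 2)) * d := by
    simp only [hg]
    exact hcomb _ _ _
  rw [hgval] at hle
  -- final arithmetic
  have hs3 : Real.sqrt 3 ^ 2 = 3 := Real.sq_sqrt (by norm_num)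
  have hs3nn : 0 ≤ Real.sqrt 3 := Real.sqrt_nonneg 3
  have hpi0 : (0 : ℝ) < Real.pi := Real.pi_pos
  have h1 : Real.pi * b ≤ 2 - Real.sqrt 3 := by linarith
  have h2 : 0 ≤ Real.pi * b := mul_nonneg hpi0.le hb0
  nlinarith [mul_nonneg (sub_nonneg.2 h1) (by nlinarith : (0:ℝ) ≤ 2 + Real.sqrt 3 - Real.pi * b)]
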